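/- For s ∈ (0,2) set τ = √(2/s − 1) and define q_s(x) = (4πsτ)^{−1/2}((τ−i)e^{iτx} + (τ+i)e^{−iτx}) for x > 0. Then for every x > 0, ∫₀^∞ e^{−|x−y|} q_s(y) dy = s·q_s(x), i.e. q_s is a generalized eigenfunction of the Wiener–Hopf (Lalescu) integral operator with kernel e^{−|x−y|} for the eigenvalue s. -/

import Mathlib

open MeasureTheory Real Set

noncomputable section

/-- The normalized generalized eigenfunction q_s of Lalescu's operator:
q_s(x) = (4πsτ)^{-1/2}((τ-i)e^{iτx} + (τ+i)e^{-iτx}) with τ = √(2/s - 1). -/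
def lalescuEigenfun (s x : ℝ) : ℂ :=
  (Real.sqrt (4 * π * s * Real.sqrt (2 / s - 1)) : ℂ)⁻¹ *
    (((Real.sqrt (2 / s - 1) : ℂ) - Complex.I) *
        Complex.exp (Complex.I * (Real.sqrt (2 / s - 1) : ℂ) * (x : ℂ)) +
      ((Real.sqrt (2 / s - 1) : ℂ) + Complex.I) *
        Complex.exp (-(Complex.I * (Real.sqrt (2 / s - 1) : ℂ) * (x : ℂ))))
/-! On `(0, ∞)` the kernel `e^{-|x-y|}` maps `e^{μy}` (for `Re μ < 1`, `μ ≠ -1`) to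
`2/(1-μ²)·e^{μx} - e^{-x}/(1+μ)`: an eigenfunction term plus a boundary term coming from the
endpoint `0`. For `μ = ±iτ` the multiplier is `2/(1+τ²) = s`, and the coefficients `τ ∓ i` of
`q_s` are exactly those that make the two boundary terms cancel. -/

open scoped Complex

section

variable {μ : ℂ}

lemma norm_exp_neg_abs_sub_mul_cexp_le (x y : ℝ) :
    ‖(Real.exp (-|x - y|) : ℂ) * cexp (μ * y)‖ ≤ Real.exp x * Real.exp ((μ.re - 1) * y) := by
  rw [norm_mul, Complex.norm_real, Real.norm_of_nonneg (Real.exp_nonneg _), Complex.norm_exp,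
    Complex.re_mul_ofReal, ← Real.exp_add, ← Real.exp_add]
  exact Real.exp_le_exp.2 (by linarith [neg_abs_le (x - y)])

lemma integrableOn_exp_neg_abs_sub_mul_cexp (hμ : μ.re < 1) (x : ℝ) :
    IntegrableOn (fun y : ℝ => (Real.exp (-|x - y|) : ℂ) * cexp (μ * y)) (Ioi 0) :=
  ((integrableOn_exp_mul_Ioi (sub_neg.2 hμ) 0).const_mul (Real.exp x)).mono'
    (by fun_prop) (.of_forall fun y => norm_exp_neg_abs_sub_mul_cexp_le x y)

lemma setIntegral_Ioc_exp_neg_abs_sub_mul_cexp (hμ : 1 + μ ≠ 0) {x : ℝ} (hx : 0 ≤ x) :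
    ∫ y in Ioc 0 x, (Real.exp (-|x - y|) : ℂ) * cexp (μ * y) =
      (cexp (μ * x) - cexp (-x)) / (1 + μ) := by
  have hEq : EqOn (fun y : ℝ => (Real.exp (-|x - y|) : ℂ) * cexp (μ * y))
      (fun y : ℝ => cexp (-x) * cexp ((1 + μ) * y)) (uIcc 0 x) := by
    intro y hy
    rw [uIcc_of_le hx] at hy
    simp only [abs_of_nonneg (sub_nonneg.2 hy.2), Complex.ofReal_exp, ← Complex.exp_add]
    push_cast
    ring_nf
  rw [← intervalIntegral.integral_of_le hx, intervalIntegral.integral_congr hEq,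
    intervalIntegral.integral_const_mul, integral_exp_mul_complex hμ, mul_div_assoc', mul_sub,
    ← Complex.exp_add, ← Complex.exp_add]
  push_cast
  ring_nf

lemma setIntegral_Ioi_exp_neg_abs_sub_mul_cexp (hμ : μ.re < 1) (x : ℝ) :
    ∫ y in Ioi x, (Real.exp (-|x - y|) : ℂ) * cexp (μ * y) = cexp (μ * x) / (1 - μ) := by
  have hEq : EqOn (fun y : ℝ => (Real.exp (-|x - y|) : ℂ) * cexp (μ * y))
      (fun y : ℝ => cexp x * cexp ((μ - 1) * y)) (Ioi x) := by
    intro y hy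
    simp only [abs_sub_comm x y, abs_of_pos (sub_pos.2 (mem_Ioi.1 hy)), Complex.ofReal_exp,
      ← Complex.exp_add]
    push_cast
    ring_nf
  have hre : (μ - 1).re < 0 := by simpa using hμ
  rw [setIntegral_congr_fun measurableSet_Ioi hEq, integral_const_mul,
    integral_exp_mul_complex_Ioi hre, mul_div_assoc', mul_neg, ← Complex.exp_add, neg_div,
    ← div_neg, neg_sub]
  ring_nf

lemma integral_exp_neg_abs_sub_mul_cexp (hμ : μ.re < 1) (hμ' : 1 + μ ≠ 0) {x : ℝ}
    (hx : 0 ≤ x) :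
    ∫ y in Ioi 0, (Real.exp (-|x - y|) : ℂ) * cexp (μ * y) =
      2 / (1 - μ ^ 2) * cexp (μ * x) - cexp (-x) / (1 + μ) := by
  have hint := integrableOn_exp_neg_abs_sub_mul_cexp hμ x
  have hμ'' : 1 - μ ≠ 0 := sub_ne_zero.2 (by rintro rfl; simp at hμ)
  have hμ2 : 1 - μ ^ 2 ≠ 0 := by
    rw [show 1 - μ ^ 2 = (1 - μ) * (1 + μ) by ring]
    exact mul_ne_zero hμ'' hμ'
  rw [← Ioc_union_Ioi_eq_Ioi hx, setIntegral_union (Ioc_disjoint_Ioi le_rfl) measurableSet_Ioi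
    (hint.mono_set Ioc_subset_Ioi_self) (hint.mono_set (Ioi_subset_Ioi hx)),
    setIntegral_Ioc_exp_neg_abs_sub_mul_cexp hμ' hx, setIntegral_Ioi_exp_neg_abs_sub_mul_cexp hμ]
  field_simp
  ring

end

lemma integral_exp_neg_abs_sub_mul_cexp_I_mul_add (τ : ℝ) (a b : ℂ) {x : ℝ} (hx : 0 ≤ x) :
    ∫ y in Ioi 0, (Real.exp (-|x - y|) : ℂ) *
        (a * cexp (Complex.I * τ * y) + b * cexp (-(Complex.I * τ * y))) =
      2 / (1 + τ ^ 2) * (a * cexp (Complex.I * τ * x) + b * cexp (-(Complex.I * τ * x))) -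
        cexp (-x) * (a / (1 + Complex.I * τ) + b / (1 - Complex.I * τ)) := by
  have hpos : (Complex.I * τ).re < 1 ∧ 1 + Complex.I * τ ≠ 0 :=
    ⟨by simp, fun h => by simpa using congrArg Complex.re h⟩
  have hneg : (-Complex.I * τ).re < 1 ∧ 1 + -Complex.I * τ ≠ 0 :=
    ⟨by simp, fun h => by simpa using congrArg Complex.re h⟩
  simp_rw [mul_add, mul_left_comm _ a, mul_left_comm _ b, ← neg_mul]
  rw [integral_add ((integrableOn_exp_neg_abs_sub_mul_cexp hpos.1 x).const_mul _)
    ((integrableOn_exp_neg_abs_sub_mul_cexp hneg.1 x).const_mul _), integral_const_mul,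
    integral_const_mul, integral_exp_neg_abs_sub_mul_cexp hpos.1 hpos.2 hx,
    integral_exp_neg_abs_sub_mul_cexp hneg.1 hneg.2 hx]
  simp only [neg_mul, neg_sq, mul_pow, Complex.I_sq]
  ring

/-- q_s is a generalized eigenfunction of the Lalescu integral operator with kernel
e^{-|x-y|} for the eigenvalue s: ∫₀^∞ e^{-|x-y|} q_s(y) dy = s·q_s(x) for all x > 0. -/
theorem lalescu_generalized_eigenfunction
    (s : ℝ) (hs : s ∈ Set.Ioo (0 : ℝ) 2) (x : ℝ) (hx : 0 < x) :
    ∫ y in Set.Ioi (0 : ℝ), (Real.exp (-|x - y|) : ℂ) * lalescuEigenfun s y =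
      (s : ℂ) * lalescuEigenfun s x := by
  simp only [lalescuEigenfun]
  set τ : ℝ := Real.sqrt (2 / s - 1)
  set C : ℂ := (Real.sqrt (4 * π * s * τ) : ℂ)⁻¹
  have heig : 2 / (1 + (τ : ℂ) ^ 2) = s := by
    have hτ : τ ^ 2 = 2 / s - 1 :=
      Real.sq_sqrt (by rw [sub_nonneg, le_div_iff₀ hs.1]; linarith [hs.2])
    exact_mod_cast
      (by rw [hτ, add_sub_cancel, div_div_cancel₀ two_ne_zero] : 2 / (1 + τ ^ 2) = s)
  have hbdry :
      (τ - Complex.I) / (1 + Complex.I * τ) + (τ + Complex.I) / (1 - Complex.I * τ) = 0 := by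
    have hpos : 1 + Complex.I * τ ≠ 0 := fun h => by simpa using congrArg Complex.re h
    have hneg : 1 - Complex.I * τ ≠ 0 := fun h => by simpa using congrArg Complex.re h
    rw [div_add_div _ _ hpos hneg, div_eq_zero_iff]
    left
    linear_combination (2 * τ : ℂ) * Complex.I_sq
  simp_rw [mul_left_comm _ C]
  rw [integral_const_mul, integral_exp_neg_abs_sub_mul_cexp_I_mul_add τ _ _ hx.le, heig, hbdry]
  ring
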